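/- Let p ≥ ℓ be real numbers and let (A_N), (B_N) be real sequences with A_N/N² → A₂ ∈ ℝ and B_N/N → B₁ > 0. If −A₂/B₁² > (ℓ + p)/2, then lim_{N→∞} I_{p,ℓ}(A_N, B_N) · e^{−f_N(ℓ)} = 1, where f_N(k) = k A_N + k² B_N²/2. -/
import Mathlib


open MeasureTheory Real Filter

/-- The standard Gaussian density `φ(v) = e^{-v²/2}/√(2π)` on `ℝ`. -/
noncomputable def gaussPDF (v : ℝ) : ℝ := Real.exp (-v ^ 2 / 2) / Real.sqrt (2 * Real.pi)

/-- `I_{p,ℓ}(A,B) = ∫_ℝ φ(v) (1 + e^{A+Bv})^{p-ℓ} e^{ℓ(A+Bv)} dv`. -/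
noncomputable def Iint (p ℓ A B : ℝ) : ℝ :=
  ∫ v : ℝ, gaussPDF v * (1 + Real.exp (A + B * v)) ^ (p - ℓ) * Real.exp (ℓ * (A + B * v))

/-- `f_N(k) = k A_N + k² B_N²/2`. -/
noncomputable def fExp (A B k : ℝ) : ℝ := k * A + k ^ 2 * B ^ 2 / 2

lemma gaussPDF_pos (v : ℝ) : 0 < gaussPDF v := by
  unfold gaussPDF
  positivity

lemma gaussPDF_eq : gaussPDF = fun v => Real.exp (-(1/2) * v ^ 2) / Real.sqrt (2 * Real.pi) := by
  funext v
  rw [gaussPDF, show -v^2/2 = -(1/2)*v^2 by ring]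

lemma integrable_gaussPDF : Integrable gaussPDF := by
  rw [gaussPDF_eq]
  exact (integrable_exp_neg_mul_sq (by norm_num : (0:ℝ) < 1/2)).div_const _

lemma integral_gaussPDF : ∫ v : ℝ, gaussPDF v = 1 := by
  rw [gaussPDF_eq]
  simp only [integral_div]
  rw [integral_gaussian]
  rw [show Real.pi / (1/2) = 2 * Real.pi by ring]
  rw [div_self]
  positivity

lemma gaussPDF_shift (c v : ℝ) :
    gaussPDF v * Real.exp (c * v) = Real.exp (c ^ 2 / 2) * gaussPDF (v - c) := by
  unfold gaussPDF
  rw [div_mul_eq_mul_div, ← Real.exp_add, mul_div_assoc', ← Real.exp_add]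
  congr 1
  ring_nf

lemma integrable_gaussPDF_exp (c : ℝ) :
    Integrable (fun v => gaussPDF v * Real.exp (c * v)) := by
  simp only [gaussPDF_shift]
  exact ((integrable_gaussPDF.comp_sub_right c)).const_mul _

lemma integral_gaussPDF_exp (c : ℝ) :
    ∫ v : ℝ, gaussPDF v * Real.exp (c * v) = Real.exp (c ^ 2 / 2) := by
  simp only [gaussPDF_shift]
  rw [integral_const_mul]
  have : ∫ v : ℝ, gaussPDF (v - c) = 1 := by
    simp only [sub_eq_add_neg]
    rw [integral_add_right_eq_self gaussPDF (-c), integral_gaussPDF]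
  rw [this, mul_one]


lemma key_transform (p ℓ A B : ℝ) :
    Iint p ℓ A B * Real.exp (-(fExp A B ℓ)) =
      ∫ u : ℝ, gaussPDF u * (1 + Real.exp ((A + ℓ * B ^ 2) + B * u)) ^ (p - ℓ) := by
  rw [Iint, ← integral_mul_const]
  have hpt : ∀ v : ℝ,
      gaussPDF v * (1 + Real.exp (A + B * v)) ^ (p - ℓ) * Real.exp (ℓ * (A + B * v)) *
        Real.exp (-(fExp A B ℓ)) =
      (fun u : ℝ => gaussPDF u * (1 + Real.exp ((A + ℓ * B ^ 2) + B * u)) ^ (p - ℓ))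
        (v + -(ℓ * B)) := by
    intro v
    simp only []
    rw [show A + ℓ * B ^ 2 + B * (v + -(ℓ * B)) = A + B * v by ring]
    have h1 : gaussPDF v * Real.exp (ℓ * (A + B * v)) * Real.exp (-(fExp A B ℓ)) =
        gaussPDF (v + -(ℓ * B)) := by
      have h2 : Real.exp (ℓ * (A + B * v)) * Real.exp (-(fExp A B ℓ)) =
          Real.exp ((ℓ * B) * v) * Real.exp (-((ℓ * B) ^ 2 / 2)) := by
        rw [← Real.exp_add, ← Real.exp_add]
        congr 1
        rw [fExp]; ring
      rw [mul_assoc, h2, ← mul_assoc, gaussPDF_shift (ℓ * B) v]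
      rw [show Real.exp ((ℓ*B)^2/2) * gaussPDF (v - ℓ * B) * Real.exp (-((ℓ*B)^2/2)) =
        (Real.exp ((ℓ*B)^2/2) * Real.exp (-((ℓ*B)^2/2))) * gaussPDF (v - ℓ * B) by ring,
        ← Real.exp_add, show (ℓ*B)^2/2 + -((ℓ*B)^2/2) = 0 by ring, Real.exp_zero, one_mul,
        sub_eq_add_neg]
    calc gaussPDF v * (1 + Real.exp (A + B * v)) ^ (p - ℓ) * Real.exp (ℓ * (A + B * v)) *
        Real.exp (-(fExp A B ℓ))
        = (gaussPDF v * Real.exp (ℓ * (A + B * v)) * Real.exp (-(fExp A B ℓ))) *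
          (1 + Real.exp (A + B * v)) ^ (p - ℓ) := by ring
      _ = gaussPDF (v + -(ℓ * B)) * (1 + Real.exp (A + B * v)) ^ (p - ℓ) := by rw [h1]
  simp only [hpt]
  exact integral_add_right_eq_self
    (fun u : ℝ => gaussPDF u * (1 + Real.exp ((A + ℓ * B ^ 2) + B * u)) ^ (p - ℓ)) (-(ℓ * B))

lemma rpow_one_add_le {x q : ℝ} (hx0 : 0 < x) (hq : 0 < q) :
    (1 + x) ^ q ≤ 1 + q * Real.exp q * x ^ min q 1 + 2 ^ q * x ^ q := by
  have hxq : (0:ℝ) < x ^ q := Real.rpow_pos_of_pos hx0 q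
  have hxs : (0:ℝ) < x ^ min q 1 := Real.rpow_pos_of_pos hx0 _
  rcases le_total x 1 with hx | hx
  · have h2 : (1 + x) ^ q ≤ Real.exp (q * x) := by
      calc (1 + x) ^ q ≤ (Real.exp x) ^ q := by
            apply Real.rpow_le_rpow (by positivity) _ hq.le
            rw [add_comm]
            exact Real.add_one_le_exp x
        _ = Real.exp (x * q) := (Real.exp_mul x q).symm
        _ = Real.exp (q * x) := by rw [mul_comm]
    have h3 : Real.exp (q * x) ≤ 1 + q * x * Real.exp (q * x) := by
      have ha := Real.add_one_le_exp (-(q * x))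
      have hb : Real.exp (-(q * x)) * Real.exp (q * x) = 1 := by
        rw [← Real.exp_add]; simp
      nlinarith [Real.exp_pos (q * x)]
    have h4 : Real.exp (q * x) ≤ Real.exp q := by
      apply Real.exp_le_exp.mpr
      nlinarith
    have h5 : x ≤ x ^ min q 1 := by
      calc x = x ^ (1:ℝ) := (Real.rpow_one x).symm
        _ ≤ x ^ min q 1 := Real.rpow_le_rpow_of_exponent_ge hx0 hx (min_le_right q 1)
    have h6 : q * x * Real.exp (q * x) ≤ q * Real.exp q * x ^ min q 1 := by
      have hx0' : 0 ≤ x := hx0.le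
      calc q * x * Real.exp (q * x) ≤ q * x * Real.exp q := by
            apply mul_le_mul_of_nonneg_left h4 (by positivity)
        _ ≤ q * x ^ min q 1 * Real.exp q := by
            apply mul_le_mul_of_nonneg_right _ (Real.exp_pos q).le
            exact mul_le_mul_of_nonneg_left h5 hq.le
        _ = q * Real.exp q * x ^ min q 1 := by ring
    have h7 : (0:ℝ) < 2 ^ q := Real.rpow_pos_of_pos (by norm_num) q
    nlinarith
  · have h2 : (1 + x) ^ q ≤ (2 * x) ^ q := by
      apply Real.rpow_le_rpow (by positivity) (by linarith) hq.le
    rw [Real.mul_rpow (by norm_num) hx0.le] at h2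
    nlinarith [mul_pos (mul_pos hq (Real.exp_pos q)) hxs]

lemma exp_tendsto_zero (t C₂ B₁ : ℝ) (C B : ℕ → ℝ)
    (hC : Tendsto (fun N : ℕ => C N / (N : ℝ) ^ 2) atTop (nhds C₂))
    (hB : Tendsto (fun N : ℕ => B N / (N : ℝ)) atTop (nhds B₁))
    (hneg : t * C₂ + t ^ 2 * B₁ ^ 2 / 2 < 0) :
    Tendsto (fun N : ℕ => Real.exp (t * C N + t ^ 2 * (B N) ^ 2 / 2)) atTop (nhds 0) := by
  have hg : Tendsto (fun N : ℕ => t * (C N / (N:ℝ)^2) + t^2/2 * (B N / (N:ℝ))^2) atTop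
      (nhds (t * C₂ + t ^ 2 * B₁ ^ 2 / 2)) := by
    have h' := (hC.const_mul t).add ((hB.mul hB).const_mul (t^2/2))
    rw [show t * C₂ + t^2/2 * (B₁ * B₁) = t * C₂ + t ^ 2 * B₁ ^ 2 / 2 by ring] at h'
    exact h'.congr (fun N => by ring)
  have hN2 : Tendsto (fun N : ℕ => ((N:ℝ))^2) atTop atTop :=
    (tendsto_pow_atTop (by norm_num)).comp tendsto_natCast_atTop_atTop
  have hbot : Tendsto (fun N : ℕ => (t * (C N / (N:ℝ)^2) + t^2/2 * (B N / (N:ℝ))^2) * (N:ℝ)^2)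
      atTop atBot := by
    exact Tendsto.neg_mul_atTop hneg hg hN2
  have heq : ∀ᶠ N : ℕ in atTop,
      (t * (C N / (N:ℝ)^2) + t^2/2 * (B N / (N:ℝ))^2) * (N:ℝ)^2
        = t * C N + t ^ 2 * (B N) ^ 2 / 2 := by
    filter_upwards [eventually_ge_atTop 1] with N hN
    have hN0 : ((N:ℝ)) ≠ 0 := by
      simp only [ne_eq, Nat.cast_eq_zero]
      omega
    field_simp
  have := (tendsto_congr' heq).mp hbot
  exact Real.tendsto_exp_atBot.comp this

lemma continuous_gaussPDF : Continuous gaussPDF := by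
  unfold gaussPDF
  fun_prop

lemma integrable_aux (t c b : ℝ) :
    Integrable (fun u : ℝ => gaussPDF u * Real.exp (t * (c + b * u))) := by
  have h : ∀ u : ℝ, gaussPDF u * Real.exp (t * (c + b * u)) =
      Real.exp (t * c) * (gaussPDF u * Real.exp ((t * b) * u)) := by
    intro u
    rw [show t * (c + b*u) = t*c + (t*b)*u by ring, Real.exp_add]
    ring
  simp only [h]
  exact (integrable_gaussPDF_exp (t * b)).const_mul _

lemma integral_aux (t c b : ℝ) :
    ∫ u : ℝ, gaussPDF u * Real.exp (t * (c + b * u)) =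
      Real.exp (t * c + t ^ 2 * b ^ 2 / 2) := by
  have h : ∀ u : ℝ, gaussPDF u * Real.exp (t * (c + b * u)) =
      Real.exp (t * c) * (gaussPDF u * Real.exp ((t * b) * u)) := by
    intro u
    rw [show t * (c + b*u) = t*c + (t*b)*u by ring, Real.exp_add]
    ring
  simp only [h]
  rw [integral_const_mul, integral_gaussPDF_exp, ← Real.exp_add]
  congr 1
  ring

/-- Last case of the `p ≥ ℓ` branch of Proposition S1: for `-A₂/B₁² > (ℓ+p)/2`,
`I_{p,ℓ}(A_N, B_N) ≈ e^{f_N(ℓ)}` at leading order. -/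
theorem Iint_asymptotics_pge_ell (p ℓ A₂ B₁ : ℝ) (hpl : p ≥ ℓ) (A B : ℕ → ℝ)
    (hA : Tendsto (fun N : ℕ => A N / (N : ℝ) ^ 2) atTop (nhds A₂))
    (hB : Tendsto (fun N : ℕ => B N / (N : ℝ)) atTop (nhds B₁))
    (hB₁ : 0 < B₁) (h1 : -A₂ / B₁ ^ 2 > (ℓ + p) / 2) :
    Tendsto (fun N : ℕ => Iint p ℓ (A N) (B N) * Real.exp (-(fExp (A N) (B N) ℓ)))
      atTop (nhds 1) := by
  simp only [key_transform]
  rcases eq_or_lt_of_le (sub_nonneg.mpr hpl) with hq | hq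
  · simp only [← hq, Real.rpow_zero, mul_one, integral_gaussPDF]
    exact tendsto_const_nhds
  · set q : ℝ := p - ℓ with hqdef
    set s : ℝ := min q 1 with hsdef
    have hs0 : 0 < s := lt_min hq one_pos
    have hsq : s ≤ q := min_le_left q 1
    set C : ℕ → ℝ := fun N => A N + ℓ * (B N) ^ 2 with hCdef
    have hC : Tendsto (fun N : ℕ => C N / (N : ℝ) ^ 2) atTop (nhds (A₂ + ℓ * B₁ ^ 2)) := by
      have h' := hA.add ((hB.mul hB).const_mul ℓ)
      rw [show A₂ + ℓ * (B₁ * B₁) = A₂ + ℓ * B₁ ^ 2 by ring] at h'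
      apply h'.congr'
      filter_upwards [eventually_ge_atTop 1] with N hN
      have hN0 : ((N : ℝ)) ≠ 0 := by
        simp only [ne_eq, Nat.cast_eq_zero]; omega
      simp only [hCdef]
      field_simp
    have hkey : A₂ + (ℓ + p) * B₁ ^ 2 / 2 < 0 := by
      have hb2 : (0:ℝ) < B₁ ^ 2 := by positivity
      rw [gt_iff_lt, lt_div_iff₀ hb2] at h1
      linarith
    have hneg : ∀ t : ℝ, 0 < t → t ≤ q →
        t * (A₂ + ℓ * B₁ ^ 2) + t ^ 2 * B₁ ^ 2 / 2 < 0 := by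
      intro t ht htq
      have h2 : A₂ + ℓ * B₁ ^ 2 + t * B₁ ^ 2 / 2 < 0 := by
        have hb2 : (0:ℝ) ≤ B₁ ^ 2 := by positivity
        have : A₂ + ℓ * B₁ ^ 2 + q * B₁ ^ 2 / 2 < 0 := by
          rw [hqdef]; nlinarith
        nlinarith
      nlinarith
    have hzs := exp_tendsto_zero s _ B₁ C B hC hB (hneg s hs0 hsq)
    have hzq := exp_tendsto_zero q _ B₁ C B hC hB (hneg q hq le_rfl)
    set g : ℕ → ℝ → ℝ :=
      fun N u => gaussPDF u * (1 + Real.exp (C N + B N * u)) ^ q with hgdef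
    set big : ℕ → ℝ → ℝ := fun N u =>
      gaussPDF u + q * Real.exp q * (gaussPDF u * Real.exp (s * (C N + B N * u)))
        + 2 ^ q * (gaussPDF u * Real.exp (q * (C N + B N * u))) with hbigdef
    have hbig_int : ∀ N, Integrable (big N) := fun N =>
      (integrable_gaussPDF.add ((integrable_aux s (C N) (B N)).const_mul _)).add
        ((integrable_aux q (C N) (B N)).const_mul _)
    have hptwise : ∀ N u, g N u ≤ big N u := by
      intro N u
      have hx0 : (0:ℝ) < Real.exp (C N + B N * u) := Real.exp_pos _
      have h := rpow_one_add_le hx0 hq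
      have hxs : Real.exp (C N + B N * u) ^ s = Real.exp (s * (C N + B N * u)) := by
        rw [← Real.exp_mul, mul_comm]
      have hxq : Real.exp (C N + B N * u) ^ q = Real.exp (q * (C N + B N * u)) := by
        rw [← Real.exp_mul, mul_comm]
      rw [← hsdef, hxs, hxq] at h
      have hg0 := gaussPDF_pos u
      simp only [hgdef, hbigdef]
      nlinarith
    have hg_int : ∀ N, Integrable (g N) := by
      intro N
      apply (hbig_int N).mono'
      · apply Continuous.aestronglyMeasurable
        apply (continuous_gaussPDF).mul
        apply Continuous.rpow_const
        · continuity
        · intro u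
          left
          positivity
      · filter_upwards with u
        rw [Real.norm_eq_abs, abs_of_nonneg]
        · exact hptwise N u
        · have := gaussPDF_pos u
          have : (0:ℝ) ≤ (1 + Real.exp (C N + B N * u)) ^ q :=
            Real.rpow_nonneg (by positivity) q
          simp only [hgdef]
          positivity
    have hlow : ∀ N, 1 ≤ ∫ u : ℝ, g N u := by
      intro N
      rw [← integral_gaussPDF]
      apply integral_mono integrable_gaussPDF (hg_int N)
      intro u
      have h1' : (1:ℝ) ≤ (1 + Real.exp (C N + B N * u)) ^ q :=
        Real.one_le_rpow (by nlinarith [Real.exp_pos (C N + B N * u)]) hq.le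
      have := gaussPDF_pos u
      simp only [hgdef]
      nlinarith
    set UB : ℕ → ℝ := fun N =>
      1 + q * Real.exp q * Real.exp (s * C N + s ^ 2 * (B N) ^ 2 / 2)
        + 2 ^ q * Real.exp (q * C N + q ^ 2 * (B N) ^ 2 / 2) with hUBdef
    have hup : ∀ N, (∫ u : ℝ, g N u) ≤ UB N := by
      intro N
      calc (∫ u : ℝ, g N u) ≤ ∫ u : ℝ, big N u :=
            integral_mono (hg_int N) (hbig_int N) (hptwise N)
        _ = UB N := by
            simp only [hbigdef, hUBdef]
            have i2 : Integrable (fun u : ℝ =>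
                q * Real.exp q * (gaussPDF u * Real.exp (s * (C N + B N * u)))) volume :=
              (integrable_aux s (C N) (B N)).const_mul _
            have i3 : Integrable (fun u : ℝ =>
                2 ^ q * (gaussPDF u * Real.exp (q * (C N + B N * u)))) volume :=
              (integrable_aux q (C N) (B N)).const_mul _
            have i1 : Integrable (fun u : ℝ => gaussPDF u +
                q * Real.exp q * (gaussPDF u * Real.exp (s * (C N + B N * u)))) volume :=
              integrable_gaussPDF.add i2
            rw [integral_add i1 i3, integral_add integrable_gaussPDF i2,
              integral_const_mul, integral_const_mul, integral_gaussPDF,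
              integral_aux, integral_aux]
    have hU : Tendsto UB atTop (nhds 1) := by
      have h := (tendsto_const_nhds : Tendsto (fun _ : ℕ => (1:ℝ)) atTop (nhds 1)).add
        ((hzs.const_mul (q * Real.exp q)).add (hzq.const_mul (2 ^ q)))
      simp only [mul_zero, add_zero] at h
      exact h.congr (fun N => by simp only [hUBdef]; ring)
    exact tendsto_of_tendsto_of_tendsto_of_le_of_le tendsto_const_nhds hU hlow hup
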